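/- arXiv:math/0503564 — 5 statements merged into one kernel-verified Lean document; each statement's English description precedes it below -/
import Mathlib

section
/- Let R be a commutative (associative, unital) ring, let x, y be elements of R, and let k, l, m, n be nonnegative integers such that x² = 1 + m·x + k·y, y² = 1 + l·x + n·y, and x·y = k·x + l·y in R. If the family (1, x, y) is linearly independent over ℤ in R, then k² + l² = l·m + k·n + 1. -/
/-- If `x, y` in a commutative ring `R` satisfy the multiplication rules of the based
ring `K(k,l,m,n)` and `(1, x, y)` is linearly independent over `ℤ`, then the
associativity constraint `k² + l² = l·m + k·n + 1` holds. -/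
theorem stmt_0 (R : Type*) [CommRing R] (x y : R) (k l m n : ℕ)
    (hx : x ^ 2 = 1 + (m : ℤ) • x + (k : ℤ) • y)
    (hy : y ^ 2 = 1 + (l : ℤ) • x + (n : ℤ) • y)
    (hxy : x * y = (k : ℤ) • x + (l : ℤ) • y)
    (hli : LinearIndependent ℤ ![(1 : R), x, y]) :
    k ^ 2 + l ^ 2 = l * m + k * n + 1 := by
  simp only [zsmul_eq_mul] at hx hy hxy
  push_cast at hx hy hxy
  set c : ℤ := ((l : ℤ) * m + k * n + 1) - ((k : ℤ) ^ 2 + l ^ 2) with hc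
  have key : (c : R) * y = 0 := by
    push_cast [hc]
    linear_combination (-(y : R) + k) * hx + (-(m : R) + l + x) * hxy + (-(k : R)) * hy
  have h0 : c = 0 := by
    have := Fintype.linearIndependent_iff.mp hli ![0, 0, c] ?_ 2
    · simpa using this
    · simp [Fin.sum_univ_three, zsmul_eq_mul, key]
  have : ((k : ℤ)) ^ 2 + (l : ℤ) ^ 2 = (l : ℤ) * m + k * n + 1 := by linarith [hc ▸ h0]
  exact_mod_cast this
end

section
/- Let G be a finite group with exactly 3 conjugacy classes (equivalently, exactly 3 isomorphism classes of irreducible complex representations). Then G is isomorphic either to the cyclic group ℤ/3ℤ or to the symmetric group S₃. -/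
open Finset

private lemma arith_aux (n a b : ℕ) (ha : a ∣ n) (hb : b ∣ n) (ha1 : 1 ≤ a) (hb1 : 1 ≤ b)
    (hn : n = 1 + a + b) : n = 3 ∨ n = 4 ∨ n = 6 := by
  wlog hab : a ≤ b with Hsym
  · exact Hsym n b a hb ha hb1 ha1 (by omega) (by omega)
  have hbn : b < n := by omega
  have h2b : 2 * b ≤ n := by
    obtain ⟨l, rfl⟩ := hb
    match l with
    | 0 => omega
    | 1 => omega
    | (l + 2) => calc 2 * b ≤ b * (l + 2) := by nlinarith
                 _ = b * (l+2) := rfl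
  rcases (by omega : 2 * b = n - 1 ∨ 2 * b = n) with h | h
  · have hbd : b ∣ n - (n - 1) := Nat.dvd_sub hb (h ▸ dvd_mul_left b 2)
    have hb1' : b = 1 := Nat.eq_one_of_dvd_one (by rwa [show n - (n-1) = 1 by omega] at hbd)
    omega
  · have hn2 : n = 2 * a + 2 := by omega
    have ha2 : a ∣ 2 := by
      have h1 : a ∣ 2 * a + 2 := hn2 ▸ ha
      have h2 : a ∣ 2 * a := dvd_mul_left a 2
      exact (Nat.dvd_add_right h2).mp h1
    have ha2' : a ≤ 2 := Nat.le_of_dvd (by norm_num) ha2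
    interval_cases a <;> omega

/-- `permCongr` as a `MulEquiv`. -/
noncomputable def permMulEquiv {α β : Type*} (e : α ≃ β) : Equiv.Perm α ≃* Equiv.Perm β where
  toEquiv := e.permCongr
  map_mul' σ τ := by
    ext x
    simp [Equiv.permCongr_apply]

/-- A nonabelian (trivial-center) group of order 6 is isomorphic to S₃. -/
private lemma order_six (G : Type*) [Group G] [Fintype G] (h6 : Fintype.card G = 6)
    (hcenter : ∀ b : G, (∀ g : G, g * b * g⁻¹ = b) → b = 1) :
    Nonempty (G ≃* Equiv.Perm (Fin 3)) := by
  classical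
  obtain ⟨b, hb⟩ := exists_prime_orderOf_dvd_card 2 (by rw [h6]; norm_num)
  set H := Subgroup.zpowers b with hHdef
  have hb1 : b ≠ 1 := by
    intro hh
    rw [hh, orderOf_one] at hb
    omega
  have hcardH : Nat.card H = 2 := by rw [Nat.card_zpowers, hb]
  have hmemH : ∀ x : G, x ∈ H → x = 1 ∨ x = b := by
    intro x hx
    obtain ⟨k, hk⟩ := Subgroup.mem_zpowers_iff.mp hx
    have hb2 : b ^ (2 : ℤ) = 1 := by
      have := pow_orderOf_eq_one b
      rw [hb] at this
      exact_mod_cast this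
    have : b ^ k = b ^ (k % 2) := by
      conv_lhs => rw [← Int.mul_ediv_add_emod k 2]
      rw [zpow_add, zpow_mul, hb2, one_zpow, one_mul]
    rcases Int.emod_two_eq k with h | h <;> rw [← hk, this, h]
    · simp
    · simp
  have hindex : H.index = 3 := by
    have := H.index_mul_card
    rw [hcardH, Nat.card_eq_fintype_card, h6] at this
    omega
  have hquot : Nat.card (G ⧸ H) = 3 := hindex
  let φ := MulAction.toPermHom G (G ⧸ H)
  have hkerle : φ.ker ≤ H := (Subgroup.normalCore_eq_ker H) ▸ H.normalCore_le
  have hkerdvd : Nat.card φ.ker ∣ 2 := hcardH ▸ Subgroup.card_dvd_of_le hkerle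
  have hker : φ.ker = ⊥ := by
    rcases (Nat.le_of_dvd (by norm_num) hkerdvd).lt_or_eq with hlt | heq
    · have h1 : Nat.card φ.ker = 1 := by
        have := Nat.card_pos (α := φ.ker)
        omega
      exact Subgroup.card_eq_one.mp h1
    · exfalso
      have hHK : φ.ker = H :=
        Subgroup.eq_of_le_of_card_ge hkerle (by rw [hcardH, heq])
      have : H.Normal := hHK ▸ φ.normal_ker
      have hbc : b = 1 := by
        apply hcenter
        intro g
        have hg : g * b * g⁻¹ ∈ H := this.conj_mem b (Subgroup.mem_zpowers b) g
        rcases hmemH _ hg with h | h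
        · exfalso
          apply hb1
          have : b = g⁻¹ * (g * b * g⁻¹) * g := by group
          rw [this, h]; group
        · exact h
      exact hb1 hbc
  have hinj : Function.Injective φ := (MonoidHom.ker_eq_bot_iff φ).mp hker
  have hcards : Fintype.card G = Fintype.card (Equiv.Perm (G ⧸ H)) := by
    rw [Fintype.card_perm, h6]
    have : Fintype.card (G ⧸ H) = 3 := by
      rw [← Nat.card_eq_fintype_card, hquot]
    rw [this]
    rfl
  have hbij : Function.Bijective φ :=
    (Fintype.bijective_iff_injective_and_card φ).mpr ⟨hinj, hcards⟩
  have e3 : (G ⧸ H) ≃ Fin 3 :=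
    Fintype.equivFinOfCardEq (by rw [← Nat.card_eq_fintype_card, hquot])
  exact ⟨(MulEquiv.ofBijective φ hbij).trans (permMulEquiv e3)⟩

/-- A finite group with exactly 3 conjugacy classes is isomorphic to `ℤ/3ℤ` or
to the symmetric group `S₃`. -/
theorem stmt_2 (G : Type*) [Group G] [Fintype G]
    (h : Nat.card (ConjClasses G) = 3) :
    Nonempty (G ≃* Multiplicative (ZMod 3)) ∨ Nonempty (G ≃* Equiv.Perm (Fin 3)) := by
  classical
  haveI : Fintype (ConjClasses G) := Fintype.ofFinite _
  haveI instc : ∀ x : ConjClasses G, Fintype x.carrier := fun x => Fintype.ofFinite _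
  by_cases habel : ∀ a g : G, g * a * g⁻¹ = a
  · left
    have hbij : Function.Bijective (ConjClasses.mk : G → ConjClasses G) := by
      constructor
      · intro x y hxy
        obtain ⟨c, hc⟩ := isConj_iff.mp (ConjClasses.mk_eq_mk_iff_isConj.mp hxy)
        rw [← hc, habel]
      · exact ConjClasses.mk_surjective
    have hcard : Nat.card G = 3 := by rw [Nat.card_eq_of_bijective _ hbij, h]
    haveI : Fact (Nat.Prime 3) := ⟨by norm_num⟩
    exact ⟨mulEquivOfPrimeCardEq hcard (by simp [Nat.card_eq_fintype_card])⟩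
  · right
    have hsum : ∑ x : ConjClasses G, x.carrier.toFinset.card = Fintype.card G :=
      sum_conjClasses_card_eq_card G
    have hdvd : ∀ x : ConjClasses G, x.carrier.toFinset.card ∣ Fintype.card G := by
      intro x
      obtain ⟨g, rfl⟩ := x.exists_rep
      have horb := MulAction.card_orbit_mul_card_stabilizer_eq_card_group (ConjAct G) g
      rw [ConjAct.card] at horb
      have heq : Fintype.card (MulAction.orbit (ConjAct G) g) =
          (ConjClasses.mk g).carrier.toFinset.card := by
        rw [Set.toFinset_card]
        exact Fintype.card_congr (Equiv.setCongr (ConjAct.orbit_eq_carrier_conjClasses g))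
      rw [heq] at horb
      exact ⟨_, horb.symm⟩
    have hpos : ∀ x : ConjClasses G, 1 ≤ x.carrier.toFinset.card := by
      intro x
      obtain ⟨g, rfl⟩ := x.exists_rep
      rw [Nat.one_le_iff_ne_zero, ← Nat.pos_iff_ne_zero, Finset.card_pos]
      exact ⟨g, Set.mem_toFinset.mpr ConjClasses.mem_carrier_mk⟩
    have hone : (ConjClasses.mk (1 : G)).carrier.toFinset.card = 1 := by
      rw [Finset.card_eq_one]
      refine ⟨1, ?_⟩
      ext x
      simp only [Set.mem_toFinset, ConjClasses.mem_carrier_iff_mk_eq, Finset.mem_singleton,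
        ConjClasses.mk_eq_mk_iff_isConj, isConj_one_left]
    have hc3 : Fintype.card (ConjClasses G) = 3 := by rw [← Nat.card_eq_fintype_card, h]
    set e₀ := ConjClasses.mk (1 : G) with he₀
    have herase : (Finset.univ.erase e₀).card = 2 := by
      rw [Finset.card_erase_of_mem (Finset.mem_univ _), Finset.card_univ, hc3]
    obtain ⟨X, Y, hXY, hXYeq⟩ := Finset.card_eq_two.mp herase
    have huniv : (Finset.univ : Finset (ConjClasses G)) = insert e₀ {X, Y} := by
      rw [← hXYeq, Finset.insert_erase (Finset.mem_univ e₀)]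
    have hsum2 : Fintype.card G =
        1 + (X.carrier.toFinset.card + Y.carrier.toFinset.card) := by
      rw [← hsum, ← Finset.add_sum_erase _ _ (Finset.mem_univ e₀), hXYeq,
        Finset.sum_pair hXY, hone]
    obtain hn3 | hn4 | hn6 := arith_aux (Fintype.card G) X.carrier.toFinset.card
      Y.carrier.toFinset.card (hdvd X) (hdvd Y) (hpos X) (hpos Y) (by omega)
    · exfalso
      haveI : Fact (Nat.Prime 3) := ⟨by norm_num⟩
      have hcyc : IsCyclic G :=
        isCyclic_of_prime_card (p := 3) (by rw [Nat.card_eq_fintype_card, hn3])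
      letI : CommGroup G := IsCyclic.commGroup
      exact habel fun a g => by rw [mul_comm g a, mul_assoc, mul_inv_cancel, mul_one]
    · exfalso
      haveI : Fact (Nat.Prime 2) := ⟨by norm_num⟩
      have hcomm := IsPGroup.commutative_of_card_eq_prime_sq (p := 2) (G := G)
        (by rw [Nat.card_eq_fintype_card, hn4]; norm_num)
      exact habel fun a g => by rw [hcomm g a, mul_assoc, mul_inv_cancel, mul_one]
    · refine order_six G hn6 ?_
      intro b hbcent
      by_contra hb1
      have hcarb : (ConjClasses.mk b).carrier.toFinset.card = 1 := by
        rw [Finset.card_eq_one]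
        refine ⟨b, ?_⟩
        ext x
        simp only [Set.mem_toFinset, ConjClasses.mem_carrier_iff_mk_eq, Finset.mem_singleton,
          ConjClasses.mk_eq_mk_iff_isConj]
        constructor
        · intro hx
          obtain ⟨c, hc⟩ := isConj_iff.mp hx
          have h2 := hbcent c⁻¹
          rw [inv_inv, ← hc] at h2
          have h3 : c⁻¹ * (c * x * c⁻¹) * c = x := by group
          rw [h3] at h2
          rw [h2, hc]
        · rintro rfl; rfl
      have hX1 : X.carrier.toFinset.card ≠ 1 := by
        intro h1
        have h4 : Y.carrier.toFinset.card = 4 := by omega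
        have := hdvd Y
        rw [h4, hn6] at this
        norm_num at this
      have hY1 : Y.carrier.toFinset.card ≠ 1 := by
        intro h1
        have h4 : X.carrier.toFinset.card = 4 := by omega
        have := hdvd X
        rw [h4, hn6] at this
        norm_num at this
      have hmem : ConjClasses.mk b ∈ insert e₀ ({X, Y} : Finset (ConjClasses G)) := by
        rw [← huniv]; exact Finset.mem_univ _
      rcases Finset.mem_insert.mp hmem with hbe | hbXY
      · rw [he₀, ConjClasses.mk_eq_mk_iff_isConj, isConj_one_left] at hbe
        exact hb1 hbe
      · rcases Finset.mem_insert.mp hbXY with hbX | hbY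
        · exact hX1 (hbX ▸ hcarb)
        · rw [Finset.mem_singleton] at hbY
          exact hY1 (hbY ▸ hcarb)
end

section
/- Let n be an integer with n ≥ 2, let y be a positive real number satisfying y² = n·y + 2, and let θ be a complex root of unity (i.e., θ^k = 1 for some positive integer k). Then n·y ≠ −2·(θ + θ⁻¹) (as complex numbers). -/
/-! The two sides have different absolute values. A root of unity `θ` has `‖θ‖ = 1`, so
`‖-2 (θ + θ⁻¹)‖ ≤ 4`; on the other hand `y (y - n) = 2 > 0` forces `y > n`, so `n y > n² ≥ 4`. -/

theorem norm_add_inv_le_two {𝕜 : Type*} [NormedDivisionRing 𝕜] {z : 𝕜} (hz : ‖z‖ = 1) :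
    ‖z + z⁻¹‖ ≤ 2 :=
  calc ‖z + z⁻¹‖ ≤ ‖z‖ + ‖z⁻¹‖ := norm_add_le _ _
    _ = 2 := by rw [norm_inv, hz]; norm_num

theorem lt_of_sq_eq_mul_add {a y c : ℝ} (hy : 0 < y) (hc : 0 < c) (h : y ^ 2 = a * y + c) :
    a < y := by
  nlinarith

/-- If `n ≥ 2`, `y > 0` is the positive root of `y² = n·y + 2`, and `θ` is a root of
unity, then `n·y ≠ -2·(θ + θ⁻¹)` as complex numbers. -/
theorem stmt_5 (n : ℤ) (hn : 2 ≤ n) (y : ℝ) (hy : 0 < y)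
    (heq : y ^ 2 = n * y + 2) (θ : ℂ) (hθ : ∃ k : ℕ, 0 < k ∧ θ ^ k = 1) :
    (n : ℂ) * (y : ℂ) ≠ -2 * (θ + θ⁻¹) := by
  obtain ⟨k, hk, hθk⟩ := hθ
  have hn' : (2 : ℝ) ≤ n := by exact_mod_cast hn
  have hny : 4 < (n : ℝ) * y := by
    nlinarith [lt_of_sq_eq_mul_add hy two_pos heq]
  have hrhs : ‖-2 * (θ + θ⁻¹)‖ ≤ 4 := by
    rw [norm_mul, norm_neg, Complex.norm_two]
    linarith [norm_add_inv_le_two (Complex.norm_eq_one_of_pow_eq_one hθk hk.ne')]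
  have hlhs : ‖(n : ℂ) * (y : ℂ)‖ = n * y := by
    rw [← Complex.ofReal_intCast, ← Complex.ofReal_mul, Complex.norm_real, Real.norm_eq_abs,
      abs_of_pos (by linarith)]
  intro h
  rw [h] at hlhs
  linarith
end

section
/- Let k, l, m, n be nonnegative integers satisfying k² + l² = l·m + k·n + 1. If moreover (k²·m + l³)·l = (k³ + l²·n)·k, then k ≤ 1 and l ≤ 1. -/
/-- If nonnegative integers `k, l, m, n` satisfy `k² + l² = l·m + k·n + 1` and
`(k²·m + l³)·l = (k³ + l²·n)·k`, then `k ≤ 1` and `l ≤ 1`. -/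
theorem stmt_8 (k l m n : ℕ)
    (h : k ^ 2 + l ^ 2 = l * m + k * n + 1)
    (h' : (k ^ 2 * m + l ^ 3) * l = (k ^ 3 + l ^ 2 * n) * k) :
    k ≤ 1 ∧ l ≤ 1 := by
  rcases Nat.eq_zero_or_pos k with hk | hk
  · subst hk
    refine ⟨by norm_num, ?_⟩
    have hd : l ∣ 1 := by
      have h1 : l ∣ l * m + 1 := by
        have : l * m + 1 = l ^ 2 := by omega
        rw [this]; exact dvd_pow_self l (by norm_num)
      exact (Nat.dvd_add_right (dvd_mul_right l m)).mp h1
    exact Nat.le_of_dvd one_pos hd |>.trans le_rfl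
  rcases Nat.eq_zero_or_pos l with hl | hl
  · subst hl
    refine ⟨?_, by norm_num⟩
    have hd : k ∣ 1 := by
      have h1 : k ∣ k * n + 1 := by
        have : k * n + 1 = k ^ 2 := by omega
        rw [this]; exact dvd_pow_self k (by norm_num)
      exact (Nat.dvd_add_right (dvd_mul_right k n)).mp h1
    exact Nat.le_of_dvd one_pos hd
  -- main case: k ≥ 1, l ≥ 1, derive contradiction
  exfalso
  have hZ : (k : ℤ) ^ 2 + l ^ 2 = l * m + k * n + 1 := by exact_mod_cast h
  have hZ' : ((k : ℤ) ^ 2 * m + l ^ 3) * l = ((k : ℤ) ^ 3 + l ^ 2 * n) * k := by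
    exact_mod_cast h'
  have key : (k : ℤ) ^ 2 = ((k : ℤ) ^ 2 + l ^ 2) * ((l : ℤ) ^ 2 - k * n) := by
    linear_combination -hZ' - (k : ℤ) ^ 2 * hZ
  have hk1 : (1 : ℤ) ≤ k := by exact_mod_cast hk
  have hl1 : (1 : ℤ) ≤ l := by exact_mod_cast hl
  have hd : (1 : ℤ) ≤ (l : ℤ) ^ 2 - k * n := by nlinarith
  nlinarith
end

section
/- There are no integers s and t with s ≠ 0, t ≠ 0, and t² ≠ 1 satisfying (in ℚ) the equation −t·s² − t³ − (s² + 1)/t = −(t/(t² + 1))·((s·(t² + 1) + (t⁴ − 1)/s)² + 2·(t² + 1)). -/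
/-- There are no integers `s, t` with `s ≠ 0`, `t ≠ 0`, `t² ≠ 1` satisfying (in `ℚ`)
the Vieta relation of Case 3(b). -/
theorem stmt_11 :
    ¬ ∃ s t : ℤ, s ≠ 0 ∧ t ≠ 0 ∧ t ^ 2 ≠ 1 ∧
      (-(t : ℚ) * (s : ℚ) ^ 2 - (t : ℚ) ^ 3 - ((s : ℚ) ^ 2 + 1) / (t : ℚ) =
        -((t : ℚ) / ((t : ℚ) ^ 2 + 1)) *
          (((s : ℚ) * ((t : ℚ) ^ 2 + 1) + ((t : ℚ) ^ 4 - 1) / (s : ℚ)) ^ 2 +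
            2 * ((t : ℚ) ^ 2 + 1))) := by
  rintro ⟨s, t, hs, ht, ht2, heq⟩
  have hsQ : (s : ℚ) ≠ 0 := Int.cast_ne_zero.mpr hs
  have htQ : (t : ℚ) ≠ 0 := Int.cast_ne_zero.mpr ht
  have h1 : (t : ℚ) ^ 2 + 1 ≠ 0 := by positivity
  field_simp at heq
  have key : ((s : ℚ) ^ 4 * ((t:ℚ) ^ 2 + 1) + (s:ℚ) ^ 2 * (2 * (t:ℚ) ^ 4 + (t:ℚ) ^ 2 + 1)
      + (t:ℚ) ^ 2 * ((t:ℚ) ^ 4 - 1)) * (((t:ℚ) ^ 2 - 1) * ((t:ℚ) ^ 2 + 1)) = 0 := by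
    linear_combination heq
  have keyZ : (s ^ 4 * (t ^ 2 + 1) + s ^ 2 * (2 * t ^ 4 + t ^ 2 + 1)
      + t ^ 2 * (t ^ 4 - 1)) * ((t ^ 2 - 1) * (t ^ 2 + 1)) = 0 := by exact_mod_cast key
  have hs2 : 1 ≤ s ^ 2 := by rcases lt_or_gt_of_ne hs with h | h <;> nlinarith
  have ht4 : 4 ≤ t ^ 2 := by
    have hcases : t = -1 ∨ t = 1 ∨ t ≤ -2 ∨ 2 ≤ t := by omega
    rcases hcases with h | h | h | h
    · subst h; norm_num at ht2
    · subst h; norm_num at ht2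
    · nlinarith
    · nlinarith
  have ht8 : 16 ≤ t ^ 4 := by nlinarith
  have hA : 0 < s ^ 4 * (t ^ 2 + 1) + s ^ 2 * (2 * t ^ 4 + t ^ 2 + 1)
      + t ^ 2 * (t ^ 4 - 1) := by nlinarith [sq_nonneg (s^2), sq_nonneg s]
  have hB : 0 < (t ^ 2 - 1) * (t ^ 2 + 1) := by nlinarith
  exact absurd keyZ (mul_pos hA hB).ne'
end
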